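/- Let m, n ≥ 3 be integers and σ = (a₁, …, a_m) a non-decreasing sequence of positive integers with a₁ < n and a_{m−1} = a_m = n. Define a height-2 poset P(σ) with minimal elements x₁, …, x_n, maximal elements y₁, …, y_m, and x_i < y_j iff i ≤ a_j. Then P(σ) is a block, P(σ) is connected, and iir(P(σ)) = |P(σ)| = n + m. -/

import Mathlib

open scoped Classical

/-- `S` is an inclusion representation of the poset `α`. -/
def IsRepr {α β : Type} [PartialOrder α] (S : α → Finset β) : Prop :=
  ∀ x y : α, x ≤ y ↔ S x ⊆ S y

/-- The ground set of a representation. -/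
noncomputable def ground {α β : Type} [Fintype α] (S : α → Finset β) : Finset β :=
  Finset.univ.biUnion S

/-- `S` is a reduction of `T`. -/
def IsReduction {α β γ : Type} [Fintype α] (S : α → Finset β) (T : α → Finset γ) : Prop :=
  (ground S).card ≤ (ground T).card ∧ ∀ x, (S x).card ≤ (T x).card

/-- An inclusion representation is irreducible if it admits no strict reduction. -/
def IrreducibleRepr {α β : Type} [PartialOrder α] [Fintype α] (S : α → Finset β) : Prop :=
  IsRepr S ∧ ∀ T : α → Finset ℕ, IsRepr T → IsReduction T S → IsReduction S T

/-- Maximum ground-set size over irreducible inclusion representations. -/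
noncomputable def iir (α : Type) [PartialOrder α] [Fintype α] : ℕ :=
  sSup {w | ∃ S : α → Finset ℕ, IrreducibleRepr S ∧ (ground S).card = w}

/-- Cube height. -/
noncomputable def chHeight (α : Type) [PartialOrder α] [Fintype α] : ℕ :=
  sInf {h | ∃ S : α → Finset ℕ, IsRepr S ∧ ∀ x, (S x).card ≤ h}

/-- 2-dimension. -/
noncomputable def dim2 (α : Type) [PartialOrder α] [Fintype α] : ℕ :=
  sInf {w | ∃ S : α → Finset ℕ, IsRepr S ∧ (ground S).card = w}

/-- Cube width. -/
noncomputable def cw (α : Type) [PartialOrder α] [Fintype α] : ℕ :=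
  sInf {w | ∃ S : α → Finset ℕ, IsRepr S ∧ (ground S).card = w ∧ ∀ x, (S x).card ≤ chHeight α}

/-- Closed down-set `D_P[x]` as a finset. -/
noncomputable def downSet {α : Type} [PartialOrder α] [Fintype α] (x : α) : Finset α :=
  Finset.univ.filter (· ≤ x)

/-- The canonical inclusion representation. -/
noncomputable def canonical (α : Type) [PartialOrder α] [Fintype α] : α → Finset α :=
  fun x => downSet x

/-- No Block is a Chain Property. -/
def NoBlockChain (α : Type) [PartialOrder α] : Prop :=
  ∀ x : α, ∃ y : α, ¬ x ≤ y ∧ ¬ y ≤ x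

/-- Two Down Property. -/
def TwoDown (α : Type) [PartialOrder α] : Prop :=
  ∀ y : α, (∃ a b : α, a ≠ b ∧ a ⋖ y ∧ b ⋖ y) →
    ∃ z : α, (∀ u : α, u < y → u < z) ∧ ¬ y ≤ z ∧ ¬ z ≤ y

/-- Parallel Pair Property. -/
def ParallelPair (α : Type) [PartialOrder α] : Prop :=
  ∀ x y : α, ¬ x ≤ y → ¬ y ≤ x →
    (∃ y' : α, (∀ u : α, u < x → u < y') ∧ y ≤ y' ∧ ¬ x ≤ y' ∧ ¬ y' ≤ x) ∨
    (∃ x' : α, (∀ u : α, u < y → u < x') ∧ x ≤ x' ∧ ¬ y ≤ x' ∧ ¬ x' ≤ y)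

/-- A vertical decomposition of a poset into two non-empty parts. -/
def IsVerticalDecomp {α : Type} [PartialOrder α] (A B : Set α) : Prop :=
  A.Nonempty ∧ B.Nonempty ∧ (∀ x, x ∈ A ∨ x ∈ B) ∧ ∀ x ∈ A, ∀ y ∈ B, x < y

/-- A block is a chain or a vertical prime. -/
def IsBlock (α : Type) [PartialOrder α] : Prop :=
  (∀ x y : α, x ≤ y ∨ y ≤ x) ∨ ¬ ∃ A B : Set α, IsVerticalDecomp A B

theorem mem_ground' {α β : Type} [Fintype α] {S : α → Finset β} {t : β} :
    t ∈ ground S ↔ ∃ u, t ∈ S u := by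
  rw [ground, @Finset.mem_biUnion α β Finset.univ S (Classical.decEq β) t]
  simp

theorem iir_aux_exists (m n : ℕ) (hm : 3 ≤ m) (hn : 3 ≤ n)
    (a : Fin m → ℕ) (hmono : Monotone a) (hpos : ∀ j, 1 ≤ a j)
    (halast : a ⟨m - 1, Nat.sub_lt_self (by norm_num) (by omega)⟩ = n) (haprev : a ⟨m - 2, Nat.sub_lt_self (by norm_num) (by omega)⟩ = n)
    (α : Type) [PartialOrder α] [Fintype α]
    (e : Fin n ⊕ Fin m ≃ α)
    (hmin : ∀ i i' : Fin n, e (Sum.inl i) ≤ e (Sum.inl i') ↔ i = i')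
    (hmax : ∀ j j' : Fin m, e (Sum.inr j) ≤ e (Sum.inr j') ↔ j = j')
    (hrel : ∀ (i : Fin n) (j : Fin m), e (Sum.inl i) ≤ e (Sum.inr j) ↔ (i : ℕ) + 1 ≤ a j)
    (hnotrel : ∀ (j : Fin m) (i : Fin n), ¬ e (Sum.inr j) ≤ e (Sum.inl i)) :
    ∃ S : α → Finset ℕ, IrreducibleRepr S ∧ (ground S).card = n + m := by
  have haub : ∀ j : Fin m, a j ≤ n := by
    intro j
    have h1 : j ≤ (⟨m - 1, by omega⟩ : Fin m) := by
      rw [Fin.le_def]; simp; omega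
    have := hmono h1
    rwa [halast] at this
  -- canonical representation
  set S : α → Finset ℕ := fun u =>
    Sum.elim (fun i : Fin n => ({(i : ℕ)} : Finset ℕ))
      (fun j : Fin m => Finset.range (a j) ∪ {n + (j : ℕ)}) (e.symm u) with hSdef
  have hSX : ∀ i : Fin n, S (e (Sum.inl i)) = {(i : ℕ)} := by
    intro i; rw [hSdef]; simp
  have hSY : ∀ j : Fin m, S (e (Sum.inr j)) = Finset.range (a j) ∪ {n + (j : ℕ)} := by
    intro j; rw [hSdef]; simp
  have hshape : ∀ u : α, (∃ i, u = e (Sum.inl i)) ∨ (∃ j, u = e (Sum.inr j)) := by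
    intro u
    rcases h : e.symm u with i | j
    · left; exact ⟨i, by rw [← h, Equiv.apply_symm_apply]⟩
    · right; exact ⟨j, by rw [← h, Equiv.apply_symm_apply]⟩
  -- S is a representation
  have hrepr : IsRepr S := by
    intro u v
    rcases hshape u with ⟨i, rfl⟩ | ⟨j, rfl⟩ <;> rcases hshape v with ⟨i', rfl⟩ | ⟨j', rfl⟩
    · rw [hmin, hSX, hSX]
      constructor
      · rintro rfl; exact subset_rfl
      · intro h
        have := h (Finset.mem_singleton_self _)
        simp only [Finset.mem_singleton] at this
        exact Fin.ext this
    · rw [hrel, hSX, hSY]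
      constructor
      · intro h
        intro t ht
        simp only [Finset.mem_singleton] at ht
        subst ht
        simp only [Finset.mem_union, Finset.mem_range, Finset.mem_singleton]
        left; omega
      · intro h
        have := h (Finset.mem_singleton_self _)
        simp only [Finset.mem_union, Finset.mem_range, Finset.mem_singleton] at this
        have hi := i.2
        omega
    · rw [hSY, hSX]
      constructor
      · intro h; exact absurd h (hnotrel j i')
      · intro h
        have := h (show n + (j:ℕ) ∈ _ by simp)
        simp only [Finset.mem_singleton] at this
        have := i'.2
        omega
    · rw [hmax, hSY, hSY]
      constructor
      · rintro rfl; exact subset_rfl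
      · intro h
        have := h (show n + (j:ℕ) ∈ _ by simp)
        simp only [Finset.mem_union, Finset.mem_range, Finset.mem_singleton] at this
        rcases this with h1 | h1
        · have := haub j'; omega
        · exact Fin.ext (by omega)
  -- ground of S
  have hground : ground S = Finset.range (n + m) := by
    ext t
    simp only [ground, Finset.mem_biUnion, Finset.mem_univ, true_and, Finset.mem_range]
    constructor
    · rintro ⟨u, hu⟩
      rcases hshape u with ⟨i, rfl⟩ | ⟨j, rfl⟩
      · rw [hSX] at hu
        simp only [Finset.mem_singleton] at hu
        have := i.2; omega
      · rw [hSY] at hu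
        simp only [Finset.mem_union, Finset.mem_range, Finset.mem_singleton] at hu
        have := haub j
        have := j.2
        omega
    · intro ht
      by_cases h : t < n
      · exact ⟨e (Sum.inl ⟨t, h⟩), by rw [hSX]; simp⟩
      · refine ⟨e (Sum.inr ⟨t - n, by omega⟩), ?_⟩
        rw [hSY]
        simp only [Finset.mem_union, Finset.mem_range, Finset.mem_singleton]
        right; omega
  have hgcard : (ground S).card = n + m := by rw [hground, Finset.card_range]
  refine ⟨S, ⟨hrepr, ?_⟩, hgcard⟩
  have hSYcard : ∀ j, (S (e (Sum.inr j))).card = a j + 1 := by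
    intro j
    have hd : Disjoint (Finset.range (a j)) ({n + (j : ℕ)} : Finset ℕ) := by
      simp only [Finset.disjoint_singleton_right, Finset.mem_range]
      have := haub j; omega
    rw [hSY, Finset.card_union_of_disjoint hd, Finset.card_range, Finset.card_singleton]
  intro T hT hredTS
  have hgT : (ground T).card ≤ n + m := by
    have := hredTS.1
    rwa [hgcard] at this
  have hcX : ∀ i : Fin n, (T (e (Sum.inl i))).card ≤ 1 := by
    intro i
    have := hredTS.2 (e (Sum.inl i))
    rwa [hSX, Finset.card_singleton] at this
  have hcY : ∀ j : Fin m, (T (e (Sum.inr j))).card ≤ a j + 1 := by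
    intro j
    have := hredTS.2 (e (Sum.inr j))
    rwa [hSYcard] at this
  have main : n + m ≤ (ground T).card ∧ (∀ i : Fin n, 1 ≤ (T (e (Sum.inl i))).card)
      ∧ (∀ j : Fin m, a j + 1 ≤ (T (e (Sum.inr j))).card) := by
    have hexne : ∀ i : Fin n, ∃ i' : Fin n, i' ≠ i := by
      intro i
      by_cases h : (i : ℕ) = 0
      · refine ⟨⟨1, by omega⟩, fun hh => ?_⟩
        have := congrArg Fin.val hh; simp at this; omega
      · refine ⟨⟨0, by omega⟩, fun hh => ?_⟩
        have := congrArg Fin.val hh; simp at this; omega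
    have hTne : ∀ i : Fin n, (T (e (Sum.inl i))).Nonempty := by
      intro i
      obtain ⟨i', hi'⟩ := hexne i
      rw [Finset.nonempty_iff_ne_empty]
      intro h
      have : e (Sum.inl i) ≤ e (Sum.inl i') := (hT _ _).2 (by rw [h]; exact Finset.empty_subset _)
      exact hi' ((hmin i i').1 this).symm
    -- gamma
    have hγex : ∀ i : Fin n, ∃ c, T (e (Sum.inl i)) = {c} :=
      fun i => Finset.card_eq_one.mp (le_antisymm (hcX i) (hTne i).card_pos)
    choose γ hγ using hγex
    have γinj : Function.Injective γ := by
      intro i i' h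
      have : T (e (Sum.inl i)) ⊆ T (e (Sum.inl i')) := by rw [hγ, hγ, h]
      exact (hmin i i').1 ((hT _ _).2 this)
    have hγY : ∀ (i : Fin n) (j : Fin m), γ i ∈ T (e (Sum.inr j)) ↔ (i : ℕ) < a j := by
      intro i j
      constructor
      · intro h
        by_contra hlt
        have hsub : T (e (Sum.inl i)) ⊆ T (e (Sum.inr j)) := by
          rw [hγ]; exact Finset.singleton_subset_iff.mpr h
        have := (hrel i j).1 ((hT _ _).2 hsub)
        omega
      · intro h
        have hsub : T (e (Sum.inl i)) ⊆ T (e (Sum.inr j)) := (hT _ _).1 ((hrel i j).2 (by omega))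
        exact hsub (by rw [hγ]; exact Finset.mem_singleton_self _)
    -- the "other top" map
    have hσ : ∀ j : Fin m, ∃ j' : Fin m, j' ≠ j ∧ a j' = n := by
      intro j
      by_cases h : j = ⟨m - 1, by omega⟩
      · refine ⟨⟨m - 2, by omega⟩, ?_, haprev⟩
        rw [h]; intro hh
        have := congrArg Fin.val hh; simp at this; omega
      · exact ⟨⟨m - 1, by omega⟩, fun hh => h hh.symm, halast⟩
    -- E j : extra elements
    set E : Fin m → Finset ℕ := fun j => (T (e (Sum.inr j))).filter (fun t => ∀ i, t ≠ γ i) with hEdef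
    have hEne : ∀ j, (E j).Nonempty := by
      intro j
      obtain ⟨j', hj', haj'⟩ := hσ j
      have hns : ¬ T (e (Sum.inr j)) ⊆ T (e (Sum.inr j')) :=
        fun hsub => hj' ((hmax j j').1 ((hT (e (Sum.inr j)) (e (Sum.inr j'))).2 hsub)).symm
      obtain ⟨d, hd, hdn⟩ := Finset.not_subset.mp hns
      refine ⟨d, Finset.mem_filter.mpr ⟨hd, ?_⟩⟩
      rintro i rfl
      exact hdn ((hγY i j').2 (by rw [haj']; exact i.2))
    -- Gamma j
    have hcardfilter : ∀ t, t ≤ n → (Finset.univ.filter (fun i : Fin n => (i : ℕ) < t)).card = t := by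
      intro t ht
      have himg : (Finset.univ.filter (fun i : Fin n => (i : ℕ) < t)).image Fin.val = Finset.range t := by
        ext s
        simp only [Finset.mem_image, Finset.mem_filter, Finset.mem_univ, true_and, Finset.mem_range]
        constructor
        · rintro ⟨i, hi, rfl⟩; exact hi
        · intro hs; exact ⟨⟨s, lt_of_lt_of_le hs ht⟩, hs, rfl⟩
      calc (Finset.univ.filter (fun i : Fin n => (i : ℕ) < t)).card
          = ((Finset.univ.filter (fun i : Fin n => (i : ℕ) < t)).image Fin.val).card :=
            (Finset.card_image_of_injective _ Fin.val_injective).symm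
        _ = t := by rw [himg, Finset.card_range]
    set Γ : Fin m → Finset ℕ := fun j => (Finset.univ.filter (fun i : Fin n => (i : ℕ) < a j)).image γ with hΓdef
    have hΓcard : ∀ j, (Γ j).card = a j := by
      intro j
      rw [hΓdef]
      simp only
      rw [Finset.card_image_of_injective _ γinj, hcardfilter _ (haub j)]
    have hΓsub : ∀ j, Γ j ⊆ T (e (Sum.inr j)) := by
      intro j t ht
      simp only [hΓdef, Finset.mem_image, Finset.mem_filter, Finset.mem_univ, true_and] at ht
      obtain ⟨i, hi, rfl⟩ := ht
      exact (hγY i j).2 hi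
    have hΓE : ∀ j, Disjoint (Γ j) (E j) := by
      intro j
      rw [Finset.disjoint_left]
      intro t ht hte
      simp only [hΓdef, Finset.mem_image, Finset.mem_filter, Finset.mem_univ, true_and] at ht
      obtain ⟨i, _, rfl⟩ := ht
      exact (Finset.mem_filter.mp hte).2 i rfl
    have hEcard : ∀ j, (E j).card = 1 := by
      intro j
      have hsub : Γ j ∪ E j ⊆ T (e (Sum.inr j)) := by
        apply Finset.union_subset (hΓsub j)
        intro t ht; exact (Finset.mem_filter.mp ht).1
      have h1 : (Γ j).card + (E j).card ≤ a j + 1 := by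
        rw [← Finset.card_union_of_disjoint (hΓE j)]
        exact le_trans (Finset.card_le_card hsub) (hcY j)
      rw [hΓcard j] at h1
      have := (hEne j).card_pos
      omega
    have hδex : ∀ j, ∃ d, E j = {d} := fun j => Finset.card_eq_one.mp (hEcard j)
    choose δ hδ using hδex
    have hδmem : ∀ j, δ j ∈ T (e (Sum.inr j)) := by
      intro j
      have : δ j ∈ E j := by rw [hδ]; exact Finset.mem_singleton_self _
      exact (Finset.mem_filter.mp this).1
    have hδγ : ∀ j i, δ j ≠ γ i := by
      intro j
      have : δ j ∈ E j := by rw [hδ]; exact Finset.mem_singleton_self _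
      exact (Finset.mem_filter.mp this).2
    have hδkey : ∀ j j' : Fin m, j ≠ j' → a j ≤ a j' → δ j ∉ T (e (Sum.inr j')) := by
      intro j j' hne hle
      have hns : ¬ T (e (Sum.inr j)) ⊆ T (e (Sum.inr j')) :=
        fun hsub => hne ((hmax j j').1 ((hT (e (Sum.inr j)) (e (Sum.inr j'))).2 hsub))
      obtain ⟨d, hd, hdn⟩ := Finset.not_subset.mp hns
      have hdE : d ∈ E j := by
        refine Finset.mem_filter.mpr ⟨hd, ?_⟩
        rintro i rfl
        have := (hγY i j).1 hd
        exact hdn ((hγY i j').2 (by omega))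
      have : d = δ j := by
        have := hδ j ▸ hdE
        simpa using this
      rwa [← this]
    have δinj : Function.Injective δ := by
      intro j j' h
      by_contra hne
      rcases le_total (a j) (a j') with hle | hle
      · exact hδkey j j' hne hle (h ▸ hδmem j')
      · exact hδkey j' j (fun hh => hne hh.symm) hle (h ▸ hδmem j)
    -- ground lower bound
    refine ⟨?_, ?_, ?_⟩
    · have hsub : Finset.univ.image γ ∪ Finset.univ.image δ ⊆ ground T := by
        apply Finset.union_subset
        · intro t ht
          simp only [Finset.mem_image, Finset.mem_univ, true_and] at ht
          obtain ⟨i, rfl⟩ := ht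
          exact mem_ground'.mpr ⟨e (Sum.inl i), by rw [hγ]; exact Finset.mem_singleton_self _⟩
        · intro t ht
          simp only [Finset.mem_image, Finset.mem_univ, true_and] at ht
          obtain ⟨j, rfl⟩ := ht
          exact mem_ground'.mpr ⟨e (Sum.inr j), hδmem j⟩
      have hdisj : Disjoint (Finset.univ.image γ) (Finset.univ.image δ) := by
        rw [Finset.disjoint_left]
        intro t ht ht'
        simp only [Finset.mem_image, Finset.mem_univ, true_and] at ht ht'
        obtain ⟨i, rfl⟩ := ht
        obtain ⟨j, hj⟩ := ht'
        exact hδγ j i hj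
      have hcard : (Finset.univ.image γ ∪ Finset.univ.image δ).card = n + m := by
        rw [Finset.card_union_of_disjoint hdisj,
          Finset.card_image_of_injective _ γinj, Finset.card_image_of_injective _ δinj]
        simp
      calc n + m = (Finset.univ.image γ ∪ Finset.univ.image δ).card := hcard.symm
        _ ≤ _ := Finset.card_le_card hsub
    · intro i; exact (hTne i).card_pos
    · intro j
      have hsub : Γ j ∪ {δ j} ⊆ T (e (Sum.inr j)) := by
        apply Finset.union_subset (hΓsub j)
        simpa using hδmem j
      have hdisj : Disjoint (Γ j) ({δ j} : Finset ℕ) := by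
        rw [Finset.disjoint_left]
        intro t ht ht'
        simp only [Finset.mem_singleton] at ht'
        subst ht'
        simp only [hΓdef, Finset.mem_image, Finset.mem_filter, Finset.mem_univ, true_and] at ht
        obtain ⟨i, _, hi⟩ := ht
        exact hδγ j i hi.symm
      calc a j + 1 = (Γ j ∪ {δ j}).card := by
            rw [Finset.card_union_of_disjoint hdisj, hΓcard]; simp
        _ ≤ _ := Finset.card_le_card hsub
  refine ⟨?_, ?_⟩
  · rw [hgcard]; exact main.1
  · intro u
    rcases hshape u with ⟨i, rfl⟩ | ⟨j, rfl⟩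
    · rw [hSX, Finset.card_singleton]; exact main.2.1 i
    · rw [hSYcard]; exact main.2.2 j

theorem iir_aux_upper (m n : ℕ) (hm : 3 ≤ m) (hn : 3 ≤ n)
    (a : Fin m → ℕ) (hmono : Monotone a) (hpos : ∀ j, 1 ≤ a j)
    (halast : a ⟨m - 1, Nat.sub_lt_self (by norm_num) (by omega)⟩ = n) (haprev : a ⟨m - 2, Nat.sub_lt_self (by norm_num) (by omega)⟩ = n)
    (α : Type) [PartialOrder α] [Fintype α]
    (e : Fin n ⊕ Fin m ≃ α)
    (hmin : ∀ i i' : Fin n, e (Sum.inl i) ≤ e (Sum.inl i') ↔ i = i')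
    (hmax : ∀ j j' : Fin m, e (Sum.inr j) ≤ e (Sum.inr j') ↔ j = j')
    (hrel : ∀ (i : Fin n) (j : Fin m), e (Sum.inl i) ≤ e (Sum.inr j) ↔ (i : ℕ) + 1 ≤ a j)
    (hnotrel : ∀ (j : Fin m) (i : Fin n), ¬ e (Sum.inr j) ≤ e (Sum.inl i))
    (S : α → Finset ℕ) (hrepr : IsRepr S)
    (hirr : ∀ T : α → Finset ℕ, IsRepr T → IsReduction T S → IsReduction S T) :
    (ground S).card ≤ n + m := by
  by_cases hg : (ground S).card ≤ n + m
  · exact hg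
  push_neg at hg
  have haub : ∀ j : Fin m, a j ≤ n := by
    intro j
    have h1 : j ≤ (⟨m - 1, by omega⟩ : Fin m) := by
      rw [Fin.le_def]; simp; omega
    have := hmono h1
    rwa [halast] at this
  have hshape : ∀ u : α, (∃ i, u = e (Sum.inl i)) ∨ (∃ j, u = e (Sum.inr j)) := by
    intro u
    rcases h : e.symm u with i | j
    · left; exact ⟨i, by rw [← h, Equiv.apply_symm_apply]⟩
    · right; exact ⟨j, by rw [← h, Equiv.apply_symm_apply]⟩
  have hexne : ∀ i : Fin n, ∃ i' : Fin n, i' ≠ i := by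
    intro i
    by_cases h : (i : ℕ) = 0
    · refine ⟨⟨1, by omega⟩, fun hh => ?_⟩
      have := congrArg Fin.val hh; simp at this; omega
    · refine ⟨⟨0, by omega⟩, fun hh => ?_⟩
      have := congrArg Fin.val hh; simp at this; omega
  have hSne : ∀ i : Fin n, (S (e (Sum.inl i))).Nonempty := by
    intro i
    obtain ⟨i', hi'⟩ := hexne i
    rw [Finset.nonempty_iff_ne_empty]
    intro h
    have : e (Sum.inl i) ≤ e (Sum.inl i') := (hrepr _ _).2 (by rw [h]; exact Finset.empty_subset _)
    exact hi' ((hmin i i').1 this).symm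
  have hSg : ∀ (u : α), S u ⊆ ground S := fun u t ht => mem_ground'.mpr ⟨u, ht⟩
  have hσ : ∀ j : Fin m, ∃ j' : Fin m, j' ≠ j ∧ a j' = n := by
    intro j
    by_cases h : j = ⟨m - 1, by omega⟩
    · refine ⟨⟨m - 2, by omega⟩, ?_, haprev⟩
      rw [h]; intro hh
      have := congrArg Fin.val hh; simp at this; omega
    · exact ⟨⟨m - 1, by omega⟩, fun hh => h hh.symm, halast⟩
  -- the union of the first t minimal sets
  set U : ℕ → Finset ℕ := fun t =>
    (ground S).filter (fun s => ∃ i : Fin n, (i : ℕ) < t ∧ s ∈ S (e (Sum.inl i))) with hUdef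
  have hUmem : ∀ (t s : ℕ), s ∈ U t ↔ ∃ i : Fin n, (i : ℕ) < t ∧ s ∈ S (e (Sum.inl i)) := by
    intro t s
    rw [hUdef]
    simp only [Finset.mem_filter]
    constructor
    · rintro ⟨-, h⟩; exact h
    · rintro ⟨i, hlt, hi⟩
      exact ⟨hSg _ hi, ⟨i, hlt, hi⟩⟩
  have hUsub : ∀ (t : ℕ) (j : Fin m), t ≤ a j → U t ⊆ S (e (Sum.inr j)) := by
    intro t j htj s hs
    obtain ⟨i, hi, hsi⟩ := (hUmem t s).mp hs
    have h1 : e (Sum.inl i) ≤ e (Sum.inr j) := (hrel i j).2 (by omega)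
    exact (hrepr _ _).1 h1 hsi
  have hUg : ∀ t : ℕ, U t ⊆ ground S := by
    intro t; rw [hUdef]; exact Finset.filter_subset _ _
  have tbound : ∀ j : Fin m, (U (a j)).card < (S (e (Sum.inr j))).card := by
    intro j
    obtain ⟨j', hj', haj'⟩ := hσ j
    have hns : ¬ S (e (Sum.inr j)) ⊆ S (e (Sum.inr j')) :=
      fun hsub' => hj' ((hmax j j').1 ((hrepr (e (Sum.inr j)) (e (Sum.inr j'))).2 hsub')).symm
    obtain ⟨p, hp, hpn⟩ := Finset.not_subset.mp hns
    have hpU : p ∉ U (a j) := fun hmem => hpn (hUsub (a j) j' (by rw [haj']; exact haub j) hmem)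
    have h1 : insert p (U (a j)) ⊆ S (e (Sum.inr j)) := by
      intro t ht
      rcases Finset.mem_insert.mp ht with rfl | ht
      · exact hp
      · exact hUsub (a j) j le_rfl ht
    have h2 := Finset.card_le_card h1
    rwa [Finset.card_insert_of_notMem hpU] at h2
  obtain ⟨k, hkmem, hkmin⟩ := Finset.exists_min_image (Finset.range (n + 1))
    (fun t => (U t).card + (n - t)) ⟨0, Finset.mem_range.mpr (by omega)⟩
  have hkn : k ≤ n := by have := Finset.mem_range.mp hkmem; omega
  set N : ℕ := (ground S).sup id + 1 with hNdef
  have hfresh : ∀ t ∈ ground S, t < N := by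
    intro t ht
    have h1 : t ≤ (ground S).sup id := Finset.le_sup (f := id) ht
    omega
  set T : α → Finset ℕ := fun u =>
    Sum.elim (fun i : Fin n => if (i : ℕ) < k then S (e (Sum.inl i)) else {N + (i : ℕ)})
      (fun j : Fin m => U (min (a j) k) ∪ (Finset.Ico k (a j)).image (fun s => N + s)
        ∪ {N + n + (j : ℕ)}) (e.symm u) with hTdef
  have hTX : ∀ i : Fin n,
      T (e (Sum.inl i)) = if (i : ℕ) < k then S (e (Sum.inl i)) else {N + (i : ℕ)} := by
    intro i; rw [hTdef]; simp
  have hTY : ∀ j : Fin m,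
      T (e (Sum.inr j)) = U (min (a j) k) ∪ (Finset.Ico k (a j)).image (fun s => N + s)
        ∪ {N + n + (j : ℕ)} := by
    intro j; rw [hTdef]; simp
  have hTrepr : IsRepr T := by
    intro u v
    rcases hshape u with ⟨i, rfl⟩ | ⟨j, rfl⟩ <;> rcases hshape v with ⟨i', rfl⟩ | ⟨j', rfl⟩
    · rw [hmin, hTX, hTX]
      constructor
      · rintro rfl; exact subset_rfl
      · intro hsub'
        by_cases hi : (i : ℕ) < k <;> by_cases hi' : (i' : ℕ) < k
        · rw [if_pos hi, if_pos hi'] at hsub'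
          exact (hmin i i').1 ((hrepr _ _).2 hsub')
        · rw [if_pos hi, if_neg hi'] at hsub'
          obtain ⟨t, ht⟩ := hSne i
          have h1 := hsub' ht
          rw [Finset.mem_singleton] at h1
          have h2 := hfresh t (hSg _ ht)
          exfalso; omega
        · rw [if_neg hi, if_pos hi'] at hsub'
          have h1 := hsub' (Finset.mem_singleton_self _)
          have h2 := hfresh _ (hSg _ h1)
          exfalso; omega
        · rw [if_neg hi, if_neg hi'] at hsub'
          have h1 := hsub' (Finset.mem_singleton_self _)
          rw [Finset.mem_singleton] at h1
          exact Fin.ext (by omega)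
    · rw [hrel, hTX, hTY]
      constructor
      · intro hij
        by_cases hi : (i : ℕ) < k
        · rw [if_pos hi]
          intro t ht
          refine Finset.mem_union.mpr (Or.inl (Finset.mem_union.mpr (Or.inl ?_)))
          exact (hUmem _ _).mpr ⟨i, by omega, ht⟩
        · rw [if_neg hi]
          intro t ht
          rw [Finset.mem_singleton] at ht; subst ht
          refine Finset.mem_union.mpr (Or.inl (Finset.mem_union.mpr (Or.inr ?_)))
          exact Finset.mem_image.mpr ⟨(i : ℕ), Finset.mem_Ico.mpr ⟨by omega, by omega⟩, rfl⟩
      · intro hsub'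
        by_contra hc
        push_neg at hc
        by_cases hi : (i : ℕ) < k
        · rw [if_pos hi] at hsub'
          have hss : S (e (Sum.inl i)) ⊆ S (e (Sum.inr j')) := by
            intro t ht
            have h1 := hsub' ht
            have h2 := hfresh t (hSg _ ht)
            rcases Finset.mem_union.mp h1 with h3 | h3
            · rcases Finset.mem_union.mp h3 with h4 | h4
              · exact hUsub _ j' (min_le_left _ _) h4
              · obtain ⟨s, _, hst⟩ := Finset.mem_image.mp h4
                exfalso; omega
            · rw [Finset.mem_singleton] at h3; exfalso; omega
          have := (hrel i j').1 ((hrepr _ _).2 hss)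
          omega
        · rw [if_neg hi] at hsub'
          have h1 := hsub' (Finset.mem_singleton_self _)
          rcases Finset.mem_union.mp h1 with h3 | h3
          · rcases Finset.mem_union.mp h3 with h4 | h4
            · have := hfresh _ (hUg _ h4)
              omega
            · obtain ⟨s, hs, hst⟩ := Finset.mem_image.mp h4
              have h5 := Finset.mem_Ico.mp hs
              omega
          · rw [Finset.mem_singleton] at h3
            have := i.2
            omega
    · rw [hTY, hTX]
      refine iff_of_false (hnotrel j i') ?_
      intro hsub'
      have h1 := hsub' (Finset.mem_union.mpr (Or.inr (Finset.mem_singleton_self _)))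
      by_cases hi' : (i' : ℕ) < k
      · rw [if_pos hi'] at h1
        have := hfresh _ (hSg _ h1); omega
      · rw [if_neg hi', Finset.mem_singleton] at h1
        have := i'.2; omega
    · rw [hmax, hTY, hTY]
      constructor
      · rintro rfl; exact subset_rfl
      · intro hsub'
        by_contra hc
        have h1 := hsub' (Finset.mem_union.mpr (Or.inr (Finset.mem_singleton_self _)))
        rcases Finset.mem_union.mp h1 with h3 | h3
        · rcases Finset.mem_union.mp h3 with h4 | h4
          · have := hfresh _ (hUg _ h4); omega
          · obtain ⟨s, hs, hst⟩ := Finset.mem_image.mp h4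
            have h5 := Finset.mem_Ico.mp hs
            have := haub j'
            omega
        · rw [Finset.mem_singleton] at h3
          exact hc (Fin.ext (by omega))
  have hTcards : ∀ u : α, (T u).card ≤ (S u).card := by
    intro u
    rcases hshape u with ⟨i, rfl⟩ | ⟨j, rfl⟩
    · rw [hTX]
      by_cases hi : (i : ℕ) < k
      · rw [if_pos hi]
      · rw [if_neg hi, Finset.card_singleton]
        exact (hSne i).card_pos
    · rw [hTY]
      have h1 : (U (min (a j) k) ∪ (Finset.Ico k (a j)).image (fun s => N + s)
          ∪ {N + n + (j : ℕ)}).card ≤ (U (min (a j) k)).card + (a j - k) + 1 := by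
        have hc1 := Finset.card_union_le
          (U (min (a j) k) ∪ (Finset.Ico k (a j)).image (fun s => N + s)) {N + n + (j : ℕ)}
        have hc2 := Finset.card_union_le (U (min (a j) k)) ((Finset.Ico k (a j)).image (fun s => N + s))
        have hc3 : ((Finset.Ico k (a j)).image (fun s => N + s)).card ≤ a j - k := by
          have := Finset.card_image_le (s := Finset.Ico k (a j)) (f := fun s => N + s)
          rwa [Nat.card_Ico] at this
        have hc4 : ({N + n + (j : ℕ)} : Finset ℕ).card = 1 := Finset.card_singleton _
        omega
      by_cases hajk : a j ≤ k
      · rw [min_eq_left hajk] at h1 ⊢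
        have h2 := tbound j
        omega
      · rw [min_eq_right (by omega : k ≤ a j)] at h1 ⊢
        have h2 := tbound j
        have h3 := hkmin (a j) (Finset.mem_range.mpr (by have := haub j; omega))
        have h4 := haub j
        omega
  have hgTle : (ground T).card ≤ n + m := by
    have hsubGT : ground T ⊆ U k ∪ (Finset.Ico k n).image (fun s => N + s)
        ∪ (Finset.range m).image (fun j => N + n + j) := by
      intro t ht
      obtain ⟨u, hu⟩ := mem_ground'.mp ht
      rcases hshape u with ⟨i, rfl⟩ | ⟨j, rfl⟩
      · rw [hTX] at hu
        by_cases hi : (i : ℕ) < k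
        · rw [if_pos hi] at hu
          exact Finset.mem_union.mpr (Or.inl (Finset.mem_union.mpr (Or.inl
            ((hUmem _ _).mpr ⟨i, hi, hu⟩))))
        · rw [if_neg hi, Finset.mem_singleton] at hu
          subst hu
          exact Finset.mem_union.mpr (Or.inl (Finset.mem_union.mpr (Or.inr
            (Finset.mem_image.mpr ⟨(i : ℕ), Finset.mem_Ico.mpr ⟨by omega, i.2⟩, rfl⟩))))
      · rw [hTY] at hu
        rcases Finset.mem_union.mp hu with h3 | h3
        · rcases Finset.mem_union.mp h3 with h4 | h4
          · have h5 : t ∈ U k := by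
              obtain ⟨i, hi, hti⟩ := (hUmem _ _).mp h4
              exact (hUmem _ _).mpr ⟨i, lt_of_lt_of_le hi (min_le_right _ _), hti⟩
            exact Finset.mem_union.mpr (Or.inl (Finset.mem_union.mpr (Or.inl h5)))
          · obtain ⟨s, hs, hst⟩ := Finset.mem_image.mp h4
            have h5 := Finset.mem_Ico.mp hs
            have := haub j
            exact Finset.mem_union.mpr (Or.inl (Finset.mem_union.mpr (Or.inr
              (Finset.mem_image.mpr ⟨s, Finset.mem_Ico.mpr ⟨h5.1, by omega⟩, hst⟩))))
        · rw [Finset.mem_singleton] at h3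
          subst h3
          exact Finset.mem_union.mpr (Or.inr (Finset.mem_image.mpr
            ⟨(j : ℕ), Finset.mem_range.mpr j.2, rfl⟩))
    have hc1 := Finset.card_union_le (U k ∪ (Finset.Ico k n).image (fun s => N + s))
      ((Finset.range m).image (fun j => N + n + j))
    have hc2 := Finset.card_union_le (U k) ((Finset.Ico k n).image (fun s => N + s))
    have hc3 : ((Finset.Ico k n).image (fun s => N + s)).card ≤ n - k := by
      have := Finset.card_image_le (s := Finset.Ico k n) (f := fun s => N + s)
      rwa [Nat.card_Ico] at this
    have hc4 : ((Finset.range m).image (fun j => N + n + j)).card ≤ m := by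
      have := Finset.card_image_le (s := Finset.range m) (f := fun j => N + n + j)
      rwa [Finset.card_range] at this
    have h0 := hkmin 0 (Finset.mem_range.mpr (by omega))
    have hU0 : (U 0).card = 0 := by
      rw [Finset.card_eq_zero]
      apply Finset.eq_empty_iff_forall_notMem.mpr
      intro t hmem
      obtain ⟨i, hi, _⟩ := (hUmem _ _).mp hmem
      omega
    have h5 := Finset.card_le_card hsubGT
    omega
  have hredTS : IsReduction T S := ⟨by omega, hTcards⟩
  have hfin := (hirr T hTrepr hredTS).1
  omega

set_option maxHeartbeats 1000000 in
/-- the height-2 construction `P(σ)`: minimal elements `x₁,…,xₙ`,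
maximal elements `y₁,…,y_m`, with `x_i < y_j` iff `i ≤ a_j`, for a non-decreasing
sequence `σ = (a₁,…,a_m)` of positive integers with `a₁ < n` and `a_{m-1} = a_m = n`.
Such a poset is a block, is connected, and satisfies `iir P = |P| = n + m`. -/
theorem height_two_construction (m n : ℕ) (hm : 3 ≤ m) (hn : 3 ≤ n)
    (a : Fin m → ℕ) (hmono : Monotone a) (hpos : ∀ j, 1 ≤ a j)
    (ha1 : a ⟨0, by omega⟩ < n)
    (halast : a ⟨m - 1, by omega⟩ = n) (haprev : a ⟨m - 2, by omega⟩ = n)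
    (α : Type) [PartialOrder α] [Fintype α]
    (e : Fin n ⊕ Fin m ≃ α)
    (hmin : ∀ i i' : Fin n, e (Sum.inl i) ≤ e (Sum.inl i') ↔ i = i')
    (hmax : ∀ j j' : Fin m, e (Sum.inr j) ≤ e (Sum.inr j') ↔ j = j')
    (hrel : ∀ (i : Fin n) (j : Fin m), e (Sum.inl i) ≤ e (Sum.inr j) ↔ (i : ℕ) + 1 ≤ a j)
    (hnotrel : ∀ (j : Fin m) (i : Fin n), ¬ e (Sum.inr j) ≤ e (Sum.inl i)) :
    IsBlock α ∧
    (¬ ∃ A B : Set α, A.Nonempty ∧ B.Nonempty ∧ (∀ x, x ∈ A ∨ x ∈ B) ∧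
      ∀ x ∈ A, ∀ y ∈ B, ¬ x ≤ y ∧ ¬ y ≤ x) ∧
    iir α = Fintype.card α ∧ Fintype.card α = n + m := by
  have hshape : ∀ u : α, (∃ i, u = e (Sum.inl i)) ∨ (∃ j, u = e (Sum.inr j)) := by
    intro u
    rcases h : e.symm u with i | j
    · left; exact ⟨i, by rw [← h, Equiv.apply_symm_apply]⟩
    · right; exact ⟨j, by rw [← h, Equiv.apply_symm_apply]⟩
  have hcard : Fintype.card α = n + m := by
    have h := Fintype.card_congr e
    simpa using h.symm
  refine ⟨?_, ?_, ?_, hcard⟩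
  · -- IsBlock
    right
    rintro ⟨A, B, hvd⟩
    obtain ⟨u, hu⟩ := hvd.1
    obtain ⟨v, hv⟩ := hvd.2.1
    have hcov := hvd.2.2.1
    have hlt := hvd.2.2.2
    have huv := hlt u hu v hv
    rcases hshape u with ⟨i, rfl⟩ | ⟨j, rfl⟩
    · rcases hshape v with ⟨i', rfl⟩ | ⟨j', rfl⟩
      · have h1 := (hmin i i').1 huv.le
        rw [h1] at huv
        exact lt_irrefl _ huv
      · have hminA : ∀ i'' : Fin n, e (Sum.inl i'') ∈ A := by
          intro i''
          rcases hcov (e (Sum.inl i'')) with h | h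
          · exact h
          · have h2 := (hmin i i'').1 (hlt _ hu _ h).le
            rw [← h2] at h
            exact absurd (hlt _ hu _ h) (lt_irrefl _)
        have hmaxB : ∀ j'' : Fin m, e (Sum.inr j'') ∈ B := by
          intro j''
          rcases hcov (e (Sum.inr j'')) with h | h
          · have h2 := (hmax j'' j').1 (hlt _ h _ hv).le
            rw [h2] at h
            exact absurd (hlt _ h _ hv) (lt_irrefl _)
          · exact h
        have hxy := hlt _ (hminA ⟨n - 1, by omega⟩) _ (hmaxB ⟨0, by omega⟩)
        have h3 : n - 1 + 1 ≤ a ⟨0, by omega⟩ := (hrel _ _).1 hxy.le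
        have ha1' : a ⟨0, by omega⟩ < n := ha1
        omega
    · rcases hshape v with ⟨i', rfl⟩ | ⟨j', rfl⟩
      · exact absurd huv.le (hnotrel j i')
      · have h1 := (hmax j j').1 huv.le
        rw [h1] at huv
        exact lt_irrefl _ huv
  · -- connectedness
    rintro ⟨A, B, ⟨u0, hu0⟩, ⟨v0, hv0⟩, hcov, hinc⟩
    have hX0Y : ∀ j : Fin m, e (Sum.inl ⟨0, by omega⟩) ≤ e (Sum.inr j) := by
      intro j
      refine (hrel _ _).2 ?_
      have h1 := hpos j
      have h0 : ((⟨0, by omega⟩ : Fin n) : ℕ) = 0 := rfl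
      omega
    have hXYl : ∀ i : Fin n, e (Sum.inl i) ≤ e (Sum.inr ⟨m - 1, by omega⟩) := by
      intro i
      refine (hrel _ _).2 ?_
      have h1 : a ⟨m - 1, by omega⟩ = n := halast
      have h2 := i.2
      omega
    rcases hcov (e (Sum.inl ⟨0, by omega⟩)) with h0 | h0
    · have hYA : ∀ j : Fin m, e (Sum.inr j) ∈ A := by
        intro j
        rcases hcov (e (Sum.inr j)) with h | h
        · exact h
        · exact absurd (hX0Y j) (hinc _ h0 _ h).1
      have hXA : ∀ i : Fin n, e (Sum.inl i) ∈ A := by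
        intro i
        rcases hcov (e (Sum.inl i)) with h | h
        · exact h
        · exact absurd (hXYl i) (hinc _ (hYA _) _ h).2
      rcases hshape v0 with ⟨i, rfl⟩ | ⟨j, rfl⟩
      · exact (hinc _ (hXA i) _ hv0).1 le_rfl
      · exact (hinc _ (hYA j) _ hv0).1 le_rfl
    · have hYB : ∀ j : Fin m, e (Sum.inr j) ∈ B := by
        intro j
        rcases hcov (e (Sum.inr j)) with h | h
        · exact absurd (hX0Y j) (hinc _ h _ h0).2
        · exact h
      have hXB : ∀ i : Fin n, e (Sum.inl i) ∈ B := by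
        intro i
        rcases hcov (e (Sum.inl i)) with h | h
        · exact absurd (hXYl i) (hinc _ h _ (hYB ⟨m - 1, by omega⟩)).1
        · exact h
      rcases hshape u0 with ⟨i, rfl⟩ | ⟨j, rfl⟩
      · exact (hinc _ hu0 _ (hXB i)).1 le_rfl
      · exact (hinc _ hu0 _ (hYB j)).1 le_rfl
  · -- iir
    rw [hcard]
    obtain ⟨S₀, hS₀, hg₀⟩ := iir_aux_exists m n hm hn a hmono hpos halast haprev
      α e hmin hmax hrel hnotrel
    have hub : ∀ w ∈ {w | ∃ S : α → Finset ℕ, IrreducibleRepr S ∧ (ground S).card = w},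
        w ≤ n + m := by
      rintro w ⟨S, hSirr, rfl⟩
      exact iir_aux_upper m n hm hn a hmono hpos halast haprev
        α e hmin hmax hrel hnotrel S hSirr.1 hSirr.2
    have hmem : (n + m) ∈ {w | ∃ S : α → Finset ℕ, IrreducibleRepr S ∧ (ground S).card = w} :=
      ⟨S₀, hS₀, hg₀⟩
    unfold iir
    exact le_antisymm (csSup_le ⟨n + m, hmem⟩ hub) (le_csSup ⟨n + m, hub⟩ hmem)
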